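/- Let $s, y \in \mathbb{R}^n$ with $s^Ty > 0$ and $\gamma > 0$. Then $\alpha^{BB'}(\gamma) = 1 / \beta^{BB}(\gamma)$ where $\beta^{BB}(\gamma)$ is the minimizer over $\beta \in \mathbb{R}$ of $\beta \mapsto \frac{\|\beta s - y\|^2}{1/\gamma^2 + \beta^2}$, i.e., $\beta^{BB}(\gamma) = \frac{\|y\|^2 - \|s\|^2/\gamma^2 + \sqrt{(\|y\|^2 - \|s\|^2/\gamma^2)^2 + 4(s^Ty)^2/\gamma^2}}{2 s^T y}$, and this minimizer is positive. -/

import Mathlib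

/-!
Expanding the square, the objective is `(A β² - 2 c β + B) / (g + β²)` with `A = ‖s‖²`,
`B = ‖y‖²`, `c = sᵀy` and `g = 1/γ²`. If `b` is the positive root of `c b² - (B - A g) b - c g`
and `k = c / b`, the numerator equals `(A - k)(g + β²) + k (β - b)²`, so the objective is
`A - k + k (β - b)² / (g + β²)`: its unique minimizer is `b`, which is `βBB(γ)`, and
`α^{BB'}(γ)` is `1 / b`.
-/

/-- `β ↦ ‖β s - y‖² / (g + β²)` in terms of `A = ‖s‖²`, `c = sᵀy`, `B = ‖y‖²`. -/
noncomputable def stlsQuotient (A c B g β : ℝ) : ℝ :=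
  (A * β ^ 2 - 2 * c * β + B) / (g + β ^ 2)

/-- The positive root of `c b² - (B - A g) b - c g`. -/
noncomputable def stlsRoot (A c B g : ℝ) : ℝ :=
  (B - A * g + √((B - A * g) ^ 2 + 4 * c ^ 2 * g)) / (2 * c)

lemma sum_mul_sub_sq {ι : Type*} (t : Finset ι) (s y : ι → ℝ) (β : ℝ) :
    ∑ i ∈ t, (β * s i - y i) ^ 2 =
      (∑ i ∈ t, s i ^ 2) * β ^ 2 - 2 * (∑ i ∈ t, s i * y i) * β + ∑ i ∈ t, y i ^ 2 := by
  simp only [Finset.mul_sum, Finset.sum_mul, ← Finset.sum_sub_distrib, ← Finset.sum_add_distrib]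
  exact Finset.sum_congr rfl fun i _ => by ring

section stls

variable {A c B g : ℝ}

lemma stlsQuotient_eq_add {k b : ℝ} (hkb : k * b = c) (hb : k * b ^ 2 = B - (A - k) * g)
    {β : ℝ} (hβ : g + β ^ 2 ≠ 0) :
    stlsQuotient A c B g β = A - k + k * (β - b) ^ 2 / (g + β ^ 2) := by
  rw [stlsQuotient, add_div' _ _ _ hβ]
  congr 1
  linear_combination 2 * β * hkb - hb

lemma stlsRoot_pos (hc : 0 < c) (hg : 0 < g) : 0 < stlsRoot A c B g := by
  have hroot : |B - A * g| < √((B - A * g) ^ 2 + 4 * c ^ 2 * g) := by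
    rw [← Real.sqrt_sq_eq_abs]
    exact Real.sqrt_lt_sqrt (sq_nonneg _) (by linarith [show 0 < 4 * c ^ 2 * g by positivity])
  exact div_pos (by linarith [neg_abs_le (B - A * g)]) (by positivity)

lemma stlsRoot_isRoot (hc : 0 < c) (hg : 0 < g) :
    c * stlsRoot A c B g ^ 2 = (B - A * g) * stlsRoot A c B g + c * g := by
  have hdiscrim : discrim c (-(B - A * g)) (-(c * g)) =
      √((B - A * g) ^ 2 + 4 * c ^ 2 * g) * √((B - A * g) ^ 2 + 4 * c ^ 2 * g) := by
    rw [Real.mul_self_sqrt (by positivity), discrim]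
    ring
  have h := (quadratic_eq_zero_iff hc.ne' hdiscrim (stlsRoot A c B g)).mpr
    (Or.inl (by rw [stlsRoot, neg_neg]))
  linear_combination h

lemma stlsQuotient_eq_add_stlsRoot (hc : 0 < c) (hg : 0 < g) (β : ℝ) :
    stlsQuotient A c B g β = A - c / stlsRoot A c B g +
      c / stlsRoot A c B g * (β - stlsRoot A c B g) ^ 2 / (g + β ^ 2) := by
  have hb := (stlsRoot_pos (A := A) (B := B) hc hg).ne'
  refine stlsQuotient_eq_add (div_mul_cancel₀ c hb) ?_ (by positivity)
  field_simp
  linear_combination stlsRoot_isRoot (A := A) (B := B) hc hg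

lemma stlsQuotient_stlsRoot_le (hc : 0 < c) (hg : 0 < g) (β : ℝ) :
    stlsQuotient A c B g (stlsRoot A c B g) ≤ stlsQuotient A c B g β := by
  have hb := stlsRoot_pos (A := A) (B := B) hc hg
  rw [stlsQuotient_eq_add_stlsRoot hc hg, stlsQuotient_eq_add_stlsRoot hc hg, sub_self,
    zero_pow two_ne_zero, mul_zero, zero_div, add_zero]
  exact le_add_of_nonneg_right (by positivity)

lemma eq_stlsRoot_of_stlsQuotient_eq (hc : 0 < c) (hg : 0 < g) {β : ℝ}
    (h : stlsQuotient A c B g β = stlsQuotient A c B g (stlsRoot A c B g)) :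
    β = stlsRoot A c B g := by
  have hk : 0 < c / stlsRoot A c B g := div_pos hc (stlsRoot_pos hc hg)
  rw [stlsQuotient_eq_add_stlsRoot hc hg, stlsQuotient_eq_add_stlsRoot hc hg, sub_self] at h
  have : (β - stlsRoot A c B g) ^ 2 = 0 := by
    simpa [hk.ne', (show 0 < g + β ^ 2 by positivity).ne'] using h
  exact sub_eq_zero.mp (pow_eq_zero_iff two_ne_zero |>.mp this)

end stls

theorem stmt_19 (n : ℕ) (s y : Fin n → ℝ) (hsy : 0 < ∑ i, s i * y i)
    (γ : ℝ) (hγ : 0 < γ) :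
    let c : ℝ := ∑ i, s i * y i
    let βBB : ℝ := ((∑ i, y i ^ 2) - (∑ i, s i ^ 2) / γ ^ 2 +
      Real.sqrt (((∑ i, y i ^ 2) - (∑ i, s i ^ 2) / γ ^ 2) ^ 2 + 4 * c ^ 2 / γ ^ 2)) / (2 * c)
    let h : ℝ → ℝ := fun β => (∑ i, (β * s i - y i) ^ 2) / (1 / γ ^ 2 + β ^ 2)
    0 < βBB ∧
    (∀ β : ℝ, h βBB ≤ h β) ∧ (∀ β : ℝ, h β = h βBB → β = βBB) ∧
    (2 * c) / ((∑ i, y i ^ 2) - (∑ i, s i ^ 2) / γ ^ 2 +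
      Real.sqrt (((∑ i, s i ^ 2) / γ ^ 2 - (∑ i, y i ^ 2)) ^ 2 + 4 * c ^ 2 / γ ^ 2))
      = 1 / βBB := by
  intro c βBB h
  have hg : (0 : ℝ) < 1 / γ ^ 2 := by positivity
  have hβBB : βBB = stlsRoot (∑ i, s i ^ 2) c (∑ i, y i ^ 2) (1 / γ ^ 2) := by
    simp only [βBB, stlsRoot, mul_one_div]
  have hh : h = stlsQuotient (∑ i, s i ^ 2) c (∑ i, y i ^ 2) (1 / γ ^ 2) := by
    ext β
    simp only [h, stlsQuotient, sum_mul_sub_sq, c]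
  rw [hh, hβBB]
  refine ⟨stlsRoot_pos hsy hg, stlsQuotient_stlsRoot_le hsy hg,
    fun β => eq_stlsRoot_of_stlsQuotient_eq hsy hg, ?_⟩
  rw [← hβBB, sub_sq_comm, one_div_div]
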